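/- arXiv:1011.1521 — 2 statements merged into one kernel-verified Lean document; each statement's English description precedes it below -/
import Mathlib

section
/- For all a₀, a₁ ∈ P_n, d(a₀, a₁) ≤ (4/√n)·( (det(g⁻¹a₀))^{1/4} + (det(g⁻¹a₁))^{1/4} ). -/
open Matrix Real MeasureTheory Filter

noncomputable section

/-- The set of real symmetric positive-definite `n × n` matrices. -/
def Pn (n : ℕ) : Set (Matrix (Fin n) (Fin n) ℝ) := {a | a.PosDef}

/-- `tr_a(b) = tr(a⁻¹ b)`. -/
def trA {n : ℕ} (a b : Matrix (Fin n) (Fin n) ℝ) : ℝ := (a⁻¹ * b).trace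

/-- `tr_a(b²) = tr((a⁻¹ b)²)`. -/
def trSq {n : ℕ} (a b : Matrix (Fin n) (Fin n) ℝ) : ℝ := ((a⁻¹ * b) * (a⁻¹ * b)).trace

/-- The `a`-traceless part `b_T = b - (1/n) tr_a(b) a`. -/
def tracelessPart {n : ℕ} (a b : Matrix (Fin n) (Fin n) ℝ) : Matrix (Fin n) (Fin n) ℝ :=
  b - ((trA a b) / (n : ℝ)) • a

/-- `(det (g⁻¹ a))^{1/4}`. -/
def qdet {n : ℕ} (g a : Matrix (Fin n) (Fin n) ℝ) : ℝ := ((g⁻¹ * a).det) ^ ((1 : ℝ) / 4)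

/-- The norm `‖b‖_a = (tr((a⁻¹b)²))^{1/2} (det (g⁻¹ a))^{1/4}`. -/
def fiberNorm {n : ℕ} (g a b : Matrix (Fin n) (Fin n) ℝ) : ℝ :=
  Real.sqrt (trSq a b) * qdet g a

/-- Entrywise derivative of a path of matrices. -/
def pathDeriv {n : ℕ} (γ : ℝ → Matrix (Fin n) (Fin n) ℝ) (t : ℝ) : Matrix (Fin n) (Fin n) ℝ :=
  Matrix.of fun i j => deriv (fun s => γ s i j) t

/-- A path of matrices is `C¹` on a set if it is entrywise `C¹` there. -/
def C1On {n : ℕ} (γ : ℝ → Matrix (Fin n) (Fin n) ℝ) (s : Set ℝ) : Prop :=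
  ∀ i j, ContDiffOn ℝ 1 (fun t => γ t i j) s

/-- `γ` is piecewise `C¹` on `[t₀, t₁]`. -/
def PiecewiseC1On {n : ℕ} (γ : ℝ → Matrix (Fin n) (Fin n) ℝ) (t₀ t₁ : ℝ) : Prop :=
  ContinuousOn γ (Set.Icc t₀ t₁) ∧
  ∃ (k : ℕ) (s : Fin (k + 1) → ℝ), StrictMono s ∧ s 0 = t₀ ∧ s (Fin.last k) = t₁ ∧
    ∀ i : Fin k, C1On γ (Set.Icc (s i.castSucc) (s i.succ))

/-- Length of a path with respect to the fiber metric determined by `g`. -/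
def pathLength {n : ℕ} (g : Matrix (Fin n) (Fin n) ℝ) (γ : ℝ → Matrix (Fin n) (Fin n) ℝ)
    (t₀ t₁ : ℝ) : ℝ :=
  ∫ t in t₀..t₁, fiberNorm g (γ t) (pathDeriv γ t)

/-- The Riemannian distance: the infimum of lengths of piecewise `C¹` paths in `P_n`. -/
def ebinDist {n : ℕ} (g a₀ a₁ : Matrix (Fin n) (Fin n) ℝ) : ℝ :=
  sInf {L : ℝ | ∃ γ : ℝ → Matrix (Fin n) (Fin n) ℝ,
    PiecewiseC1On γ 0 1 ∧ (∀ t ∈ Set.Icc (0 : ℝ) 1, γ t ∈ Pn n) ∧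
    γ 0 = a₀ ∧ γ 1 = a₁ ∧ L = pathLength g γ 0 1}

/-- `a·exp(a⁻¹ b)`, using the matrix exponential. -/
def expAt {n : ℕ} (a b : Matrix (Fin n) (Fin n) ℝ) : Matrix (Fin n) (Fin n) ℝ :=
  a * NormedSpace.exp (a⁻¹ * b)

/-- The explicit geodesic with initial point `a₀` and initial tangent `h`. -/
def geodesicPath {n : ℕ} (a₀ h : Matrix (Fin n) (Fin n) ℝ) (t : ℝ) : Matrix (Fin n) (Fin n) ℝ :=
  let hT := tracelessPart a₀ h
  let q : ℝ := 1 + t / 4 * trA a₀ h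
  let r : ℝ := t / 4 * Real.sqrt ((n : ℝ) * trSq a₀ hT)
  if hT = 0 then (q ^ ((4 : ℝ) / n)) • a₀
  else ((q ^ 2 + r ^ 2) ^ ((2 : ℝ) / n)) •
    (a₀ * NormedSpace.exp
      ((4 * Complex.arg ⟨q, r⟩ / Real.sqrt ((n : ℝ) * trSq a₀ hT)) • (a₀⁻¹ * hT)))

/-- The inverse `ψ` of the Riemannian exponential mapping based at `a₀`. -/
def psiMap {n : ℕ} (a₀ b : Matrix (Fin n) (Fin n) ℝ) : Matrix (Fin n) (Fin n) ℝ :=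
  let bT := tracelessPart a₀ b
  let ω : ℝ := Real.sqrt ((n : ℝ) * trSq a₀ bT) / 4
  if bT = 0 then ((4 / (n : ℝ)) * (Real.exp (trA a₀ b / 4) - 1)) • a₀
  else ((4 / (n : ℝ)) * (Real.exp (trA a₀ b / 4) * Real.cos ω - 1)) • a₀ +
    ((4 / Real.sqrt ((n : ℝ) * trSq a₀ bT)) * Real.exp (trA a₀ b / 4) * Real.sin ω) • bT

/-!
Rescaling `a` to `c ^ (4 / n) • a` multiplies `qdet g a` by `c` and leaves `tr((a⁻¹ b)²)` invariant
when `b` is rescaled too, so it multiplies the metric by `c`. Along the ray `s ↦ s ^ (4 / n) • a`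
the speed is therefore the constant `(4 / √n) qdet g a`, and shrinking `a` to `ε ^ (4 / n) • a`
costs `(1 - ε) (4 / √n) qdet g a`. Shrink `a₀` and `a₁` in this way and join the two small
matrices by the segment from `a₀` to `a₁` rescaled by `ε ^ (4 / n)`, whose length is `ε` times
that of the segment; then let `ε → 0`.
-/

open Set Topology

theorem le_of_forall_le_one_sub_mul_add_mul {x A B : ℝ}
    (h : ∀ ε ∈ Ioo (0 : ℝ) 1, x ≤ (1 - ε) * A + ε * B) : x ≤ A := by
  have hlim : Tendsto (fun ε : ℝ => (1 - ε) * A + ε * B) (𝓝[>] 0) (𝓝 A) := by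
    have hcont : Continuous fun ε : ℝ => (1 - ε) * A + ε * B := by fun_prop
    simpa using (hcont.tendsto 0).mono_left nhdsWithin_le_nhds
  exact ge_of_tendsto hlim (eventually_of_mem (Ioo_mem_nhdsGT one_pos) h)

section Scaling

variable {n : ℕ} {g a : Matrix (Fin n) (Fin n) ℝ}

theorem det_inv_mul_pos (hg : g.PosDef) (ha : a.PosDef) : 0 < (g⁻¹ * a).det := by
  rw [det_mul, det_nonsing_inv, Ring.inverse_eq_inv']
  exact mul_pos (inv_pos.mpr hg.det_pos) ha.det_pos

theorem qdet_pos (hg : g.PosDef) (ha : a.PosDef) : 0 < qdet g a :=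
  rpow_pos_of_pos (det_inv_mul_pos hg ha) _

theorem fiberNorm_nonneg (hg : g.PosDef) (ha : a.PosDef) (b : Matrix (Fin n) (Fin n) ℝ) :
    0 ≤ fiberNorm g a b :=
  mul_nonneg (sqrt_nonneg _) (qdet_pos hg ha).le

theorem qdet_smul (ha : 0 ≤ (g⁻¹ * a).det) {c : ℝ} (hc : 0 ≤ c) :
    qdet g (c • a) = c ^ (n / 4 : ℝ) * qdet g a := by
  rw [qdet, Matrix.mul_smul, det_smul, Fintype.card_fin, mul_rpow (by positivity) ha,
    ← rpow_natCast, ← rpow_mul hc, qdet]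
  ring_nf

theorem inv_smul_mul_smul (ha : IsUnit a.det) {c : ℝ} (hc : c ≠ 0) (d : ℝ)
    (b : Matrix (Fin n) (Fin n) ℝ) : (c • a)⁻¹ * (d • b) = (d / c) • (a⁻¹ * b) := by
  have hinv : (c • a)⁻¹ = c⁻¹ • a⁻¹ :=
    inv_eq_left_inv (by simp [smul_smul, hc, nonsing_inv_mul a ha])
  rw [hinv, smul_mul, Matrix.mul_smul, smul_smul, inv_mul_eq_div]

theorem trSq_smul_smul (ha : IsUnit a.det) {c : ℝ} (hc : c ≠ 0) (b : Matrix (Fin n) (Fin n) ℝ) :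
    trSq (c • a) (c • b) = trSq a b := by
  rw [trSq, inv_smul_mul_smul ha hc, div_self hc, one_smul, trSq]

theorem trSq_smul_smul_self (ha : IsUnit a.det) {c : ℝ} (hc : c ≠ 0) (d : ℝ) :
    trSq (c • a) (d • a) = (d / c) ^ 2 * n := by
  rw [trSq, inv_smul_mul_smul ha hc, nonsing_inv_mul a ha, smul_mul, Matrix.mul_smul, mul_one,
    smul_smul, trace_smul, trace_one, Fintype.card_fin, smul_eq_mul, sq]

theorem rpow_four_div_rpow (hn : n ≠ 0) {c : ℝ} (hc : 0 ≤ c) :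
    (c ^ (4 / n : ℝ)) ^ (n / 4 : ℝ) = c := by
  rw [← rpow_mul hc, div_mul_div_comm, mul_comm (4 : ℝ), div_self (by positivity), rpow_one]

theorem fiberNorm_rpow_smul_smul (hn : n ≠ 0) (ha : a.PosDef) (had : 0 ≤ (g⁻¹ * a).det)
    {c : ℝ} (hc : 0 < c) (b : Matrix (Fin n) (Fin n) ℝ) :
    fiberNorm g (c ^ (4 / n : ℝ) • a) (c ^ (4 / n : ℝ) • b) = c * fiberNorm g a b := by
  rw [fiberNorm, trSq_smul_smul ha.det_pos.ne'.isUnit (by positivity),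
    qdet_smul had (by positivity), rpow_four_div_rpow hn hc.le, fiberNorm]
  ring

/-- `(w₁ * (4 / n) * w₀ ^ (4 / n - 1)) • a` is the velocity of `s ↦ w s ^ (4 / n) • a` where
`w = w₀` and `w' = w₁`. -/
theorem fiberNorm_ray (hn : n ≠ 0) (ha : a.PosDef) (had : 0 ≤ (g⁻¹ * a).det) {w₀ : ℝ}
    (hw : 0 < w₀) (w₁ : ℝ) :
    fiberNorm g (w₀ ^ (4 / n : ℝ) • a) ((w₁ * (4 / n) * w₀ ^ (4 / n - 1 : ℝ)) • a)
      = |w₁| * (4 / √n) * qdet g a := by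
  have hnpos : (0 : ℝ) < n := by positivity
  have hc : 0 < w₀ ^ (4 / n : ℝ) := by positivity
  have hratio : w₁ * (4 / n) * w₀ ^ (4 / n - 1 : ℝ) / w₀ ^ (4 / n : ℝ) = w₁ * (4 / n) / w₀ := by
    rw [rpow_sub hw, rpow_one]
    field_simp
  rw [fiberNorm, trSq_smul_smul_self ha.det_pos.ne'.isUnit hc.ne', qdet_smul had hc.le,
    rpow_four_div_rpow hn hw.le, hratio, sqrt_mul (sq_nonneg _), sqrt_sq_eq_abs, abs_div, abs_mul,
    abs_of_pos hw, abs_of_pos (by positivity : (0 : ℝ) < 4 / n)]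
  field_simp
  rw [sq_sqrt hnpos.le]

end Scaling

section Paths

variable {n : ℕ} {g : Matrix (Fin n) (Fin n) ℝ}

def pathSpeed (g : Matrix (Fin n) (Fin n) ℝ) (γ : ℝ → Matrix (Fin n) (Fin n) ℝ) (t : ℝ) : ℝ :=
  fiberNorm g (γ t) (pathDeriv γ t)

theorem pathLength_eq_integral_pathSpeed (g : Matrix (Fin n) (Fin n) ℝ)
    (γ : ℝ → Matrix (Fin n) (Fin n) ℝ) (t₀ t₁ : ℝ) :
    pathLength g γ t₀ t₁ = ∫ t in t₀..t₁, pathSpeed g γ t :=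
  rfl

theorem pathDeriv_eq_of_hasDerivAt {γ : ℝ → Matrix (Fin n) (Fin n) ℝ}
    {D : Matrix (Fin n) (Fin n) ℝ} {t : ℝ} (h : ∀ i j, HasDerivAt (fun s => γ s i j) (D i j) t) :
    pathDeriv γ t = D := by
  ext i j
  exact (h i j).deriv

theorem Filter.EventuallyEq.pathDeriv_eq {γ δ : ℝ → Matrix (Fin n) (Fin n) ℝ} {t : ℝ}
    (h : γ =ᶠ[𝓝 t] δ) : pathDeriv γ t = pathDeriv δ t := by
  ext i j
  exact (h.fun_comp fun m => m i j).deriv_eq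

theorem pathDeriv_smul_const {c : ℝ → ℝ} {c' t : ℝ} (hc : HasDerivAt c c' t)
    (a : Matrix (Fin n) (Fin n) ℝ) : pathDeriv (fun s => c s • a) t = c' • a :=
  pathDeriv_eq_of_hasDerivAt fun i j => by simpa using hc.mul_const (a i j)

theorem C1On.continuousOn {γ : ℝ → Matrix (Fin n) (Fin n) ℝ} {s : Set ℝ} (h : C1On γ s) :
    ContinuousOn γ s :=
  continuousOn_pi.2 fun i => continuousOn_pi.2 fun j => (h i j).continuousOn

theorem C1On.congr {γ δ : ℝ → Matrix (Fin n) (Fin n) ℝ} {s : Set ℝ} (h : C1On δ s)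
    (hγδ : EqOn γ δ s) : C1On γ s :=
  fun i j => (h i j).congr fun t ht => by rw [hγδ ht]

theorem c1On_smul_const {c : ℝ → ℝ} {s : Set ℝ} (hc : ContDiffOn ℝ 1 c s)
    (a : Matrix (Fin n) (Fin n) ℝ) : C1On (fun t => c t • a) s :=
  fun i j => by simpa using hc.mul (contDiffOn_const (c := a i j))

theorem PiecewiseC1On.of_three {γ : ℝ → Matrix (Fin n) (Fin n) ℝ} {t₀ t₁ t₂ t₃ : ℝ}
    (h₀₁ : t₀ < t₁) (h₁₂ : t₁ < t₂) (h₂₃ : t₂ < t₃) (hγ₁ : C1On γ (Icc t₀ t₁))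
    (hγ₂ : C1On γ (Icc t₁ t₂)) (hγ₃ : C1On γ (Icc t₂ t₃)) : PiecewiseC1On γ t₀ t₃ := by
  refine ⟨?_, 3, ![t₀, t₁, t₂, t₃], ?_, rfl, rfl, ?_⟩
  · rw [← Icc_union_Icc_eq_Icc h₀₁.le (h₁₂.trans h₂₃).le, ← Icc_union_Icc_eq_Icc h₁₂.le h₂₃.le]
    exact hγ₁.continuousOn.union_of_isClosed
      (hγ₂.continuousOn.union_of_isClosed hγ₃.continuousOn isClosed_Icc isClosed_Icc)
      isClosed_Icc (isClosed_Icc.union isClosed_Icc)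
  · rw [Fin.strictMono_iff_lt_succ]
    intro i
    fin_cases i <;> simpa
  · intro i
    fin_cases i
    exacts [hγ₁, hγ₂, hγ₃]

theorem pathLength_nonneg (hg : g.PosDef) {γ : ℝ → Matrix (Fin n) (Fin n) ℝ} {t₀ t₁ : ℝ}
    (h : t₀ ≤ t₁) (hγ : ∀ t ∈ Icc t₀ t₁, γ t ∈ Pn n) : 0 ≤ pathLength g γ t₀ t₁ :=
  intervalIntegral.integral_nonneg h fun t ht => fiberNorm_nonneg hg (hγ t ht) _

theorem ebinDist_le_pathLength (hg : g.PosDef) {a₀ a₁ : Matrix (Fin n) (Fin n) ℝ}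
    {γ : ℝ → Matrix (Fin n) (Fin n) ℝ} (hγ : PiecewiseC1On γ 0 1)
    (hγP : ∀ t ∈ Icc (0 : ℝ) 1, γ t ∈ Pn n) (h₀ : γ 0 = a₀) (h₁ : γ 1 = a₁) :
    ebinDist g a₀ a₁ ≤ pathLength g γ 0 1 := by
  refine csInf_le ⟨0, ?_⟩ ⟨γ, hγ, hγP, h₀, h₁, rfl⟩
  rintro L ⟨δ, -, hδP, -, -, rfl⟩
  exact pathLength_nonneg hg zero_le_one hδP

theorem continuousOn_fiberNorm {m : ℝ → Matrix (Fin n) (Fin n) ℝ} {s : Set ℝ}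
    (hm : ContinuousOn m s) (hdet : ∀ t ∈ s, (m t).det ≠ 0) (b : Matrix (Fin n) (Fin n) ℝ) :
    ContinuousOn (fun t => fiberNorm g (m t) b) s := by
  have hinv : ContinuousOn (fun t => (m t)⁻¹) s := by
    intro t ht
    have hdet' : ContinuousAt Ring.inverse (m t).det := by
      simpa only [Ring.inverse_eq_inv'] using continuousAt_inv₀ (hdet t ht)
    exact (continuousAt_matrix_inv _ hdet').comp_continuousWithinAt (hm t ht)
  have htr : ContinuousOn (fun t => trSq (m t) b) s :=
    continuous_id.matrix_trace.comp_continuousOn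
      ((hinv.mul continuousOn_const).mul (hinv.mul continuousOn_const))
  have hq : ContinuousOn (fun t => qdet g (m t)) s :=
    (continuous_id.matrix_det.comp_continuousOn (continuousOn_const.mul hm)).rpow_const
      fun _ _ => Or.inr (by norm_num)
  exact htr.sqrt.mul hq

end Paths

section Detour

variable {n : ℕ} {g a₀ a₁ : Matrix (Fin n) (Fin n) ℝ}

theorem pathSpeed_of_eventuallyEq_ray (hn : n ≠ 0) (hg : g.PosDef) {a : Matrix (Fin n) (Fin n) ℝ}
    (ha : a.PosDef) {γ : ℝ → Matrix (Fin n) (Fin n) ℝ} {w : ℝ → ℝ} {w' t : ℝ}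
    (hγ : γ =ᶠ[𝓝 t] fun s => w s ^ (4 / n : ℝ) • a) (hw : HasDerivAt w w' t) (hwt : 0 < w t) :
    pathSpeed g γ t = |w'| * (4 / √n) * qdet g a := by
  rw [pathSpeed, hγ.eq_of_nhds, hγ.pathDeriv_eq,
    pathDeriv_smul_const (hw.rpow_const (Or.inl hwt.ne'))]
  exact fiberNorm_ray hn ha (det_inv_mul_pos hg ha).le hwt w'

theorem pathSpeed_of_eventuallyEq_rpow_smul (hn : n ≠ 0) (hg : g.PosDef) {ε : ℝ} (hε : 0 < ε)
    {γ m : ℝ → Matrix (Fin n) (Fin n) ℝ} {D : Matrix (Fin n) (Fin n) ℝ} {t : ℝ}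
    (hm : (m t).PosDef) (hγ : γ =ᶠ[𝓝 t] fun s => ε ^ (4 / n : ℝ) • m s)
    (hD : ∀ i j, HasDerivAt (fun s => m s i j) (D i j) t) :
    pathSpeed g γ t = ε * pathSpeed g m t := by
  rw [pathSpeed, pathSpeed, hγ.eq_of_nhds, hγ.pathDeriv_eq, pathDeriv_eq_of_hasDerivAt hD,
    pathDeriv_eq_of_hasDerivAt (D := ε ^ (4 / n : ℝ) • D) fun i j => by
      simpa using (hD i j).const_mul (ε ^ (4 / n : ℝ))]
  exact fiberNorm_rpow_smul_smul hn hm (det_inv_mul_pos hg hm).le hε D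

def segmentPath (a₀ a₁ : Matrix (Fin n) (Fin n) ℝ) (t : ℝ) : Matrix (Fin n) (Fin n) ℝ :=
  (2 - 3 * t) • a₀ + (3 * t - 1) • a₁

theorem continuous_segmentPath : Continuous (segmentPath a₀ a₁) := by
  unfold segmentPath
  fun_prop

theorem hasDerivAt_segmentPath_apply (t : ℝ) (i j : Fin n) :
    HasDerivAt (fun s => segmentPath a₀ a₁ s i j) (((3 : ℝ) • (a₁ - a₀)) i j) t := by
  show HasDerivAt (fun s => (2 - 3 * s) * a₀ i j + (3 * s - 1) * a₁ i j) (3 * (a₁ i j - a₀ i j)) t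
  have h := ((((hasDerivAt_id' t).const_mul 3).const_sub 2).mul_const (a₀ i j)).fun_add
    ((((hasDerivAt_id' t).const_mul 3).sub_const 1).mul_const (a₁ i j))
  exact h.congr_deriv (by ring)

theorem pathDeriv_segmentPath (t : ℝ) :
    pathDeriv (segmentPath a₀ a₁) t = (3 : ℝ) • (a₁ - a₀) :=
  pathDeriv_eq_of_hasDerivAt (hasDerivAt_segmentPath_apply t)

theorem segmentPath_posDef (ha₀ : a₀.PosDef) (ha₁ : a₁.PosDef) {t : ℝ}
    (ht : t ∈ Icc (1 / 3 : ℝ) (2 / 3)) : (segmentPath a₀ a₁ t).PosDef := by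
  rcases ht.1.eq_or_lt with rfl | h
  · norm_num [segmentPath]
    exact ha₀
  · exact PosDef.posSemidef_add (ha₀.posSemidef.smul (by linarith [ht.2]))
      (ha₁.smul (by linarith))

def detourPath (n : ℕ) (ε : ℝ) (a₀ a₁ : Matrix (Fin n) (Fin n) ℝ) (t : ℝ) :
    Matrix (Fin n) (Fin n) ℝ :=
  if t ≤ 1 / 3 then (1 - 3 * (1 - ε) * t) ^ (4 / n : ℝ) • a₀
  else if t ≤ 2 / 3 then ε ^ (4 / n : ℝ) • segmentPath a₀ a₁ t
  else (1 - 3 * (1 - ε) * (1 - t)) ^ (4 / n : ℝ) • a₁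

variable {ε : ℝ}

theorem detourPath_eqOn_Iic :
    EqOn (detourPath n ε a₀ a₁) (fun t => (1 - 3 * (1 - ε) * t) ^ (4 / n : ℝ) • a₀)
      (Iic (1 / 3)) :=
  fun _ ht => if_pos ht

theorem detourPath_eqOn_Icc :
    EqOn (detourPath n ε a₀ a₁) (fun t => ε ^ (4 / n : ℝ) • segmentPath a₀ a₁ t)
      (Icc (1 / 3) (2 / 3)) := by
  rintro t ⟨h₁, h₂⟩
  rcases h₁.eq_or_lt with rfl | h₁
  · rw [detourPath, if_pos le_rfl, show 1 - 3 * (1 - ε) * (1 / 3 : ℝ) = ε by ring]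
    norm_num [segmentPath]
  · rw [detourPath, if_neg (not_le.2 h₁), if_pos h₂]

theorem detourPath_eqOn_Ici :
    EqOn (detourPath n ε a₀ a₁) (fun t => (1 - 3 * (1 - ε) * (1 - t)) ^ (4 / n : ℝ) • a₁)
      (Ici (2 / 3)) := by
  intro t ht
  rcases (mem_Ici.1 ht).eq_or_lt with rfl | h
  · rw [detourPath, if_neg (by norm_num), if_pos le_rfl]
    dsimp only
    rw [show 1 - 3 * (1 - ε) * (1 - 2 / 3 : ℝ) = ε by ring]
    norm_num [segmentPath]
  · rw [detourPath, if_neg (by linarith), if_neg (not_le.2 h)]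

theorem detourPath_zero : detourPath n ε a₀ a₁ 0 = a₀ := by
  simp [detourPath]

theorem detourPath_one : detourPath n ε a₀ a₁ 1 = a₁ := by
  norm_num [detourPath]

theorem detourPath_mem_Pn (ha₀ : a₀.PosDef) (ha₁ : a₁.PosDef) (hε₀ : 0 < ε) (hε₁ : ε < 1) :
    ∀ t ∈ Icc (0 : ℝ) 1, detourPath n ε a₀ a₁ t ∈ Pn n := by
  rintro t ⟨h₀, h₁⟩
  rcases le_or_gt t (1 / 3) with ht | ht
  · rw [detourPath_eqOn_Iic ht]
    exact ha₀.smul (rpow_pos_of_pos (by nlinarith) _)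
  rcases le_or_gt t (2 / 3) with ht' | ht'
  · rw [detourPath_eqOn_Icc ⟨ht.le, ht'⟩]
    exact (segmentPath_posDef ha₀ ha₁ ⟨ht.le, ht'⟩).smul (rpow_pos_of_pos hε₀ _)
  · rw [detourPath_eqOn_Ici ht'.le]
    exact ha₁.smul (rpow_pos_of_pos (by nlinarith) _)

theorem detourPath_piecewiseC1On (hε₀ : 0 < ε) (hε₁ : ε < 1) :
    PiecewiseC1On (detourPath n ε a₀ a₁) 0 1 := by
  refine .of_three (by norm_num : (0 : ℝ) < 1 / 3) (by norm_num : (1 / 3 : ℝ) < 2 / 3)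
    (by norm_num) ?_ ?_ ?_
  · have hw : ContDiffOn ℝ 1 (fun t : ℝ => 1 - 3 * (1 - ε) * t) (Icc 0 (1 / 3)) := by fun_prop
    exact (c1On_smul_const (hw.rpow_const_of_ne fun t ht => by nlinarith [ht.1, ht.2]) a₀).congr
      (detourPath_eqOn_Iic.mono Icc_subset_Iic_self)
  · refine C1On.congr (fun i j => ContDiff.contDiffOn ?_) detourPath_eqOn_Icc
    simp only [segmentPath, Matrix.smul_apply, Matrix.add_apply, smul_eq_mul]
    fun_prop
  · have hw : ContDiffOn ℝ 1 (fun t : ℝ => 1 - 3 * (1 - ε) * (1 - t)) (Icc (2 / 3) 1) := by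
      fun_prop
    exact (c1On_smul_const (hw.rpow_const_of_ne fun t ht => by nlinarith [ht.1, ht.2]) a₁).congr
      (detourPath_eqOn_Ici.mono Icc_subset_Ici_self)

theorem pathSpeed_detourPath_eqOn_Ioo_zero_third (hn : n ≠ 0) (hg : g.PosDef) (ha₀ : a₀.PosDef)
    (hε₀ : 0 < ε) (hε₁ : ε < 1) :
    EqOn (pathSpeed g (detourPath n ε a₀ a₁)) (fun _ => 3 * (1 - ε) * (4 / √n) * qdet g a₀)
      (Ioo 0 (1 / 3)) := by
  intro t ht
  have hw : HasDerivAt (fun s => 1 - 3 * (1 - ε) * s) (-(3 * (1 - ε))) t := by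
    simpa using ((hasDerivAt_id t).const_mul (3 * (1 - ε))).const_sub 1
  rw [pathSpeed_of_eventuallyEq_ray hn hg ha₀
    (detourPath_eqOn_Iic.eventuallyEq_of_mem (Iic_mem_nhds ht.2)) hw (by nlinarith [ht.1, ht.2]),
    abs_neg, abs_of_pos (by linarith)]

theorem pathSpeed_detourPath_eqOn_Ioo_third_twoThirds (hn : n ≠ 0) (hg : g.PosDef)
    (ha₀ : a₀.PosDef) (ha₁ : a₁.PosDef) (hε₀ : 0 < ε) :
    EqOn (pathSpeed g (detourPath n ε a₀ a₁))
      (fun t => ε * pathSpeed g (segmentPath a₀ a₁) t)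
      (Ioo (1 / 3) (2 / 3)) := fun t ht =>
  pathSpeed_of_eventuallyEq_rpow_smul hn hg hε₀
    (segmentPath_posDef ha₀ ha₁ (Ioo_subset_Icc_self ht))
    (detourPath_eqOn_Icc.eventuallyEq_of_mem (Icc_mem_nhds ht.1 ht.2))
    (hasDerivAt_segmentPath_apply t)

theorem pathSpeed_detourPath_eqOn_Ioo_twoThirds_one (hn : n ≠ 0) (hg : g.PosDef)
    (ha₁ : a₁.PosDef) (hε₀ : 0 < ε) (hε₁ : ε < 1) :
    EqOn (pathSpeed g (detourPath n ε a₀ a₁)) (fun _ => 3 * (1 - ε) * (4 / √n) * qdet g a₁)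
      (Ioo (2 / 3) 1) := by
  intro t ht
  have hw : HasDerivAt (fun s => 1 - 3 * (1 - ε) * (1 - s)) (3 * (1 - ε)) t := by
    simpa using (((hasDerivAt_id t).const_sub 1).const_mul (3 * (1 - ε))).const_sub 1
  rw [pathSpeed_of_eventuallyEq_ray hn hg ha₁
    (detourPath_eqOn_Ici.eventuallyEq_of_mem (Ici_mem_nhds ht.1)) hw (by nlinarith [ht.1, ht.2]),
    abs_of_pos (by linarith)]

theorem pathLength_detourPath (hn : n ≠ 0) (hg : g.PosDef) (ha₀ : a₀.PosDef) (ha₁ : a₁.PosDef)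
    (hε₀ : 0 < ε) (hε₁ : ε < 1) :
    pathLength g (detourPath n ε a₀ a₁) 0 1 = (1 - ε) * (4 / √n * (qdet g a₀ + qdet g a₁)) +
      ε * pathLength g (segmentPath a₀ a₁) (1 / 3) (2 / 3) := by
  have h₁ := pathSpeed_detourPath_eqOn_Ioo_zero_third (a₁ := a₁) hn hg ha₀ hε₀ hε₁
  have h₂ := pathSpeed_detourPath_eqOn_Ioo_third_twoThirds hn hg ha₀ ha₁ hε₀
  have h₃ := pathSpeed_detourPath_eqOn_Ioo_twoThirds_one (a₀ := a₀) hn hg ha₁ hε₀ hε₁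
  have hF : ContinuousOn (pathSpeed g (segmentPath a₀ a₁)) (Icc (1 / 3) (2 / 3)) := by
    have h : pathSpeed g (segmentPath a₀ a₁) =
        fun t => fiberNorm g (segmentPath a₀ a₁ t) ((3 : ℝ) • (a₁ - a₀)) :=
      funext fun t => by rw [pathSpeed, pathDeriv_segmentPath]
    rw [h]
    exact continuousOn_fiberNorm continuous_segmentPath.continuousOn
      (fun t ht => (segmentPath_posDef ha₀ ha₁ ht).det_pos.ne') _
  have i₁ : IntervalIntegrable (pathSpeed g (detourPath n ε a₀ a₁)) volume 0 (1 / 3) :=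
    intervalIntegrable_const.congr_uIoo (by rw [uIoo_of_le (by norm_num)]; exact h₁.symm)
  have i₂ : IntervalIntegrable (pathSpeed g (detourPath n ε a₀ a₁)) volume (1 / 3) (2 / 3) :=
    ((continuousOn_const.mul hF).intervalIntegrable_of_Icc (by norm_num)).congr_uIoo
      (by rw [uIoo_of_le (by norm_num)]; exact h₂.symm)
  have i₃ : IntervalIntegrable (pathSpeed g (detourPath n ε a₀ a₁)) volume (2 / 3) 1 :=
    intervalIntegrable_const.congr_uIoo (by rw [uIoo_of_le (by norm_num)]; exact h₃.symm)
  rw [pathLength_eq_integral_pathSpeed, pathLength_eq_integral_pathSpeed,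
    ← intervalIntegral.integral_add_adjacent_intervals (i₁.trans i₂) i₃,
    ← intervalIntegral.integral_add_adjacent_intervals i₁ i₂,
    intervalIntegral.integral_congr_Ioo_of_le (by norm_num) h₁,
    intervalIntegral.integral_congr_Ioo_of_le (by norm_num) h₂,
    intervalIntegral.integral_congr_Ioo_of_le (by norm_num) h₃, intervalIntegral.integral_const,
    intervalIntegral.integral_const, intervalIntegral.integral_const_mul, smul_eq_mul, smul_eq_mul]
  ring

end Detour

/-- upper bound for the distance by the sum of fourth roots of determinants. -/
theorem stmt_3 (n : ℕ) (hn : 1 ≤ n) (g : Matrix (Fin n) (Fin n) ℝ) (hg : g ∈ Pn n) :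
    ∀ a₀ ∈ Pn n, ∀ a₁ ∈ Pn n,
      ebinDist g a₀ a₁ ≤ 4 / Real.sqrt n * (qdet g a₀ + qdet g a₁) := by
  intro a₀ ha₀ a₁ ha₁
  have hn₀ : n ≠ 0 := by omega
  refine le_of_forall_le_one_sub_mul_add_mul
    (B := pathLength g (segmentPath a₀ a₁) (1 / 3) (2 / 3)) fun ε ⟨hε₀, hε₁⟩ => ?_
  rw [← pathLength_detourPath hn₀ hg ha₀ ha₁ hε₀ hε₁]
  exact ebinDist_le_pathLength hg (detourPath_piecewiseC1On hε₀ hε₁)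
    (detourPath_mem_Pn ha₀ ha₁ hε₀ hε₁) detourPath_zero detourPath_one

end
end

section
/- Let a ∈ P_n and let v be a symmetric n×n matrix with v_T ≠ 0 and tr_a(v_T²) < (4π)²/n, and set b := a·exp(a⁻¹v). Then every point of the explicit geodesic from a to b (the explicit geodesic with initial point a and initial tangent ψ(v)) lies in the plane P := { y₁·a·exp(y₂·a⁻¹v_T) : y₁ > 0, y₂ ∈ ℝ }. -/
open Matrix Real MeasureTheory Filter

noncomputable section

/-!
Since `tr_a` is linear with `tr_a(a) = n` and `tr_a(v_T) = 0`, the tangent vector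
`ψ(v) = c₁ a + c₂ v_T` has traceless part `c₂ v_T`, where
`c₂ = 4 e^{tr_a(v)/4} sin ω / (n tr_a(v_T²))^{1/2}` is positive because the bound on
`tr_a(v_T²)` gives `0 < ω < π`. The explicit geodesic with initial tangent `h` is, by its
formula, a positive multiple of `a exp(s a⁻¹ h_T)`, so with `h = ψ(v)` it stays in the plane `P`.
-/

lemma Matrix.trace_transpose_mul_self_pos {ι κ : Type*} [Fintype ι] [Fintype κ]
    {m : Matrix ι κ ℝ} (hm : m ≠ 0) : 0 < (mᵀ * m).trace := by
  rw [← conjTranspose_eq_transpose_of_trivial]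
  exact (posSemidef_conjTranspose_mul_self m).trace_nonneg.lt_of_ne'
    (trace_conjTranspose_mul_self_eq_zero_iff.not.2 hm)

section

variable {n : ℕ} {a b : Matrix (Fin n) (Fin n) ℝ}

open scoped MatrixOrder in
-- With `s = √(a⁻¹)`, `tr((a⁻¹b)²) = tr((sbs)ᵀ(sbs))`.
lemma trSq_pos (ha : a.PosDef) (hb : b.IsSymm) (hb0 : b ≠ 0) : 0 < trSq a b := by
  set s := CFC.sqrt a⁻¹
  have hss : s * s = a⁻¹ := CFC.sqrt_mul_sqrt_self _ ha.inv.posSemidef.nonneg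
  have hs : s.IsSymm := isHermitian_iff_isSymm.1 (CFC.sqrt_nonneg a⁻¹).posSemidef.isHermitian
  have hsu : IsUnit s := (CFC.isUnit_sqrt_iff _ ha.inv.posSemidef.nonneg).2 ha.inv.isUnit
  have hsbs : s * b * s ≠ 0 := by
    rwa [Ne, hsu.mul_left_eq_zero, hsu.mul_right_eq_zero]
  have htr : trSq a b = ((s * b * s)ᵀ * (s * b * s)).trace := by
    rw [transpose_mul, transpose_mul, hs.eq, hb.eq, trSq, ← hss,
      show s * s * b * (s * s * b) = s * (s * b * s * (s * b)) by noncomm_ring,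
      trace_mul_comm]
    congr 1
    noncomm_ring
  exact htr ▸ trace_transpose_mul_self_pos hsbs

lemma trA_add (a b c : Matrix (Fin n) (Fin n) ℝ) : trA a (b + c) = trA a b + trA a c := by
  simp [trA, mul_add]

lemma trA_smul (a b : Matrix (Fin n) (Fin n) ℝ) (c : ℝ) : trA a (c • b) = c * trA a b := by
  simp [trA]

lemma trA_self (ha : IsUnit a.det) : trA a a = n := by
  simp [trA, nonsing_inv_mul a ha]

lemma trA_tracelessPart (hn : n ≠ 0) (ha : IsUnit a.det) : trA a (tracelessPart a b) = 0 := by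
  rw [tracelessPart, sub_eq_add_neg, ← neg_smul, trA_add, trA_smul, trA_self ha]
  field_simp
  ring

lemma tracelessPart_smul_add_smul_tracelessPart (hn : n ≠ 0) (ha : IsUnit a.det) (c₁ c₂ : ℝ) :
    tracelessPart a (c₁ • a + c₂ • tracelessPart a b) = c₂ • tracelessPart a b := by
  rw [tracelessPart, trA_add, trA_smul, trA_smul, trA_self ha,
    trA_tracelessPart hn ha, mul_zero, add_zero, mul_div_cancel_right₀ _ (Nat.cast_ne_zero.2 hn)]
  abel

lemma tracelessPart_psiMap (hn : n ≠ 0) (ha : IsUnit a.det) (hb : tracelessPart a b ≠ 0) :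
    tracelessPart a (psiMap a b) =
      (4 / √(n * trSq a (tracelessPart a b)) * rexp (trA a b / 4) *
        sin (√(n * trSq a (tracelessPart a b)) / 4)) • tracelessPart a b := by
  rw [psiMap]
  simp only [if_neg hb]
  exact tracelessPart_smul_add_smul_tracelessPart hn ha _ _

def expPlane (a w : Matrix (Fin n) (Fin n) ℝ) : Set (Matrix (Fin n) (Fin n) ℝ) :=
  {x | ∃ y₁ y₂ : ℝ, 0 < y₁ ∧ x = y₁ • (a * NormedSpace.exp (y₂ • (a⁻¹ * w)))}

lemma expPlane_smul_subset (w : Matrix (Fin n) (Fin n) ℝ) (c : ℝ) :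
    expPlane a (c • w) ⊆ expPlane a w := by
  rintro x ⟨y₁, y₂, hy₁, rfl⟩
  exact ⟨y₁, y₂ * c, hy₁, by rw [mul_smul_comm, smul_smul]⟩

lemma geodesicPath_mem_expPlane {h : Matrix (Fin n) (Fin n) ℝ} (hn : n ≠ 0) (ha : a.PosDef)
    (hT : (tracelessPart a h).IsSymm) (hT0 : tracelessPart a h ≠ 0) (t : ℝ) :
    geodesicPath a h t ∈ expPlane a (tracelessPart a h) := by
  have hs : 0 < √(n * trSq a (tracelessPart a h)) :=
    sqrt_pos.2 (mul_pos (by positivity) (trSq_pos ha hT hT0))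
  have hqr : 0 < (1 + t / 4 * trA a h) ^ 2 + (t / 4 * √(n * trSq a (tracelessPart a h))) ^ 2 := by
    rcases eq_or_ne t 0 with rfl | ht
    · norm_num
    · positivity
  rw [geodesicPath]
  simp only [if_neg hT0]
  exact ⟨_, _, rpow_pos_of_pos hqr _, rfl⟩

/-- the explicit geodesic from `a` to `a·exp(a⁻¹v)` lies in the plane spanned by
`a` and the direction `v_T`. -/
theorem stmt_16 (n : ℕ) (hn : 1 ≤ n)
    (a : Matrix (Fin n) (Fin n) ℝ) (ha : a ∈ Pn n)
    (v : Matrix (Fin n) (Fin n) ℝ) (hv : v.IsSymm)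
    (hvT : tracelessPart a v ≠ 0)
    (hlt : trSq a (tracelessPart a v) < (4 * Real.pi) ^ 2 / n) :
    ∀ t ∈ Set.Icc (0 : ℝ) 1, ∃ y₁ y₂ : ℝ, 0 < y₁ ∧
      geodesicPath a (psiMap a v) t =
        y₁ • (a * NormedSpace.exp (y₂ • (a⁻¹ * tracelessPart a v))) := by
  intro t _
  have hn0 : n ≠ 0 := by omega
  have hvT_symm : (tracelessPart a v).IsSymm :=
    hv.sub ((isHermitian_iff_isSymm.1 ha.isHermitian).smul _)
  have hω : 0 < √(n * trSq a (tracelessPart a v)) :=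
    sqrt_pos.2 (mul_pos (by positivity) (trSq_pos ha hvT_symm hvT))
  have hω' : √(n * trSq a (tracelessPart a v)) < 4 * π := by
    rw [sqrt_lt' (by positivity), ← lt_div_iff₀' (by positivity)]
    exact hlt
  have hsin : 0 < sin (√(n * trSq a (tracelessPart a v)) / 4) :=
    sin_pos_of_pos_of_lt_pi (by positivity) (by linarith)
  have hψ := tracelessPart_psiMap hn0 ha.det_pos.ne'.isUnit hvT
  refine expPlane_smul_subset _ _ (hψ ▸ geodesicPath_mem_expPlane hn0 ha ?_ ?_ t)
  · exact hψ ▸ hvT_symm.smul _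
  · exact hψ ▸ smul_ne_zero (by positivity) hvT

end
end
end
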